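/- arXiv:2402.18300 — 2 statements merged into one kernel-verified Lean document; each statement's English description precedes it below -/
import Mathlib

section
/- lim_{N→∞} R_{<N}(2,1;0,0) = ζ(1,2), i.e., Σ_{0<n_1<n_2<N} 1/((N−n_1)^2 (N−n_2)) converges to Σ_{0<m_1<m_2} 1/(m_1 m_2^2) as N → ∞. -/
open Filter Finset

namespace Stmt14

noncomputable def g : ℕ × ℕ → ℝ := fun p => 1 / ((p.1 : ℝ) * (p.2 : ℝ) ^ 2)

def S : Set (ℕ × ℕ) := {p | 0 < p.1 ∧ p.1 < p.2}

noncomputable def f : ℕ × ℕ → ℝ := S.indicator g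

lemma summable_f : Summable f := by
  have h32 : Summable (fun n : ℕ => 1 / (n : ℝ) ^ ((3 : ℝ) / 2)) :=
    Real.summable_one_div_nat_rpow.mpr (by norm_num)
  have hnn : (0 : ℕ → ℝ) ≤ fun n : ℕ => 1 / (n : ℝ) ^ ((3 : ℝ) / 2) := fun n =>
    div_nonneg zero_le_one (Real.rpow_nonneg (Nat.cast_nonneg n) _)
  have hprod := h32.mul_of_nonneg h32 hnn hnn
  refine Summable.of_nonneg_of_le ?_ ?_ hprod
  · intro p
    exact Set.indicator_nonneg (fun q _ => div_nonneg zero_le_one (by positivity)) p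
  · rintro ⟨a, b⟩
    by_cases hp : (a, b) ∈ S
    · rw [f, Set.indicator_of_mem hp]
      obtain ⟨h1, h2⟩ := hp
      have ha : (1 : ℝ) ≤ a := by exact_mod_cast h1
      have hab : (a : ℝ) ≤ b := by exact_mod_cast h2.le
      have hb : (1 : ℝ) ≤ b := le_trans ha hab
      have ha0 : (0 : ℝ) < a := by linarith
      have hb0 : (0 : ℝ) < b := by linarith
      simp only [g, div_mul_div_comm, one_mul]
      refine one_div_le_one_div_of_le (by positivity) ?_
      have e1 : (a : ℝ) ^ ((3 : ℝ) / 2) = a * a ^ ((1 : ℝ) / 2) := by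
        nth_rewrite 2 [← Real.rpow_one (a : ℝ)]
        rw [← Real.rpow_add ha0]; norm_num
      have e2 : (b : ℝ) ^ ((3 : ℝ) / 2) = b * b ^ ((1 : ℝ) / 2) := by
        nth_rewrite 2 [← Real.rpow_one (b : ℝ)]
        rw [← Real.rpow_add hb0]; norm_num
      have hsq : (b : ℝ) ^ ((1:ℝ)/2) * (b : ℝ) ^ ((1:ℝ)/2) = b := by
        rw [← Real.rpow_add hb0]; norm_num
      have h12 : (a : ℝ) ^ ((1:ℝ)/2) ≤ (b : ℝ) ^ ((1:ℝ)/2) :=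
        Real.rpow_le_rpow ha0.le hab (by norm_num)
      have hmix : (a : ℝ) ^ ((1:ℝ)/2) * (b : ℝ) ^ ((1:ℝ)/2) ≤ b := by
        calc (a : ℝ) ^ ((1:ℝ)/2) * (b : ℝ) ^ ((1:ℝ)/2)
            ≤ (b : ℝ) ^ ((1:ℝ)/2) * (b : ℝ) ^ ((1:ℝ)/2) :=
              mul_le_mul_of_nonneg_right h12 (Real.rpow_nonneg hb0.le _)
          _ = b := hsq
      rw [e1, e2]
      have hab0 : (0 : ℝ) ≤ (a : ℝ) * b := by positivity
      calc (a : ℝ) * (a:ℝ) ^ ((1:ℝ)/2) * ((b:ℝ) * (b:ℝ) ^ ((1:ℝ)/2))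
          = (a : ℝ) * b * ((a:ℝ) ^ ((1:ℝ)/2) * (b:ℝ) ^ ((1:ℝ)/2)) := by ring
        _ ≤ (a : ℝ) * b * b := mul_le_mul_of_nonneg_left hmix hab0
        _ = (a : ℝ) * (b : ℝ) ^ 2 := by ring
    · rw [f, Set.indicator_of_notMem hp]
      have : (0:ℝ) ≤ 1 / (a : ℝ) ^ ((3:ℝ)/2) * (1 / (b : ℝ) ^ ((3:ℝ)/2)) := by
        have := Real.rpow_nonneg (Nat.cast_nonneg a) ((3:ℝ)/2)
        have := Real.rpow_nonneg (Nat.cast_nonneg b) ((3:ℝ)/2)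
        positivity
      exact this

end Stmt14


/-- `R_{<N}(2,1;0,0) = Σ_{0<n₁<n₂<N} 1/((N−n₁)²(N−n₂))` converges to
`ζ(1,2) = Σ_{0<m₁<m₂} 1/(m₁ m₂²)` as `N → ∞`. -/
theorem stmt_14 :
    Filter.Tendsto
      (fun N : ℕ => ∑ n2 ∈ Finset.Ico 1 N, ∑ n1 ∈ Finset.Ico 1 n2,
        1 / (((N : ℝ) - n1) ^ 2 * ((N : ℝ) - n2)))
      Filter.atTop
      (nhds (∑' p : {p : ℕ × ℕ // 0 < p.1 ∧ p.1 < p.2},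
        1 / ((p.1.1 : ℝ) * (p.1.2 : ℝ) ^ 2))) := by
  classical
  have hf := Stmt14.summable_f
  have hT : Filter.Tendsto (fun N : ℕ => Finset.range N ×ˢ Finset.range N)
      Filter.atTop Filter.atTop := by
    apply Filter.tendsto_atTop_finset_of_monotone
    · intro m n hmn
      exact Finset.product_subset_product (Finset.range_subset_range.mpr hmn)
        (Finset.range_subset_range.mpr hmn)
    · intro p
      exact ⟨max p.1 p.2 + 1, Finset.mem_product.mpr
        ⟨Finset.mem_range.mpr (by omega), Finset.mem_range.mpr (by omega)⟩⟩
  have hts : (∑' p : {p : ℕ × ℕ // 0 < p.1 ∧ p.1 < p.2},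
      1 / ((p.1.1 : ℝ) * (p.1.2 : ℝ) ^ 2)) = ∑' p, Stmt14.f p := by
    rw [Stmt14.f, ← tsum_subtype Stmt14.S Stmt14.g]
    rfl
  rw [hts]
  have key : Filter.Tendsto (fun N : ℕ => ∑ p ∈ Finset.range N ×ˢ Finset.range N, Stmt14.f p)
      Filter.atTop (nhds (∑' p, Stmt14.f p)) := hf.hasSum.comp hT
  refine key.congr (fun N => ?_)
  have hstep1 : ∑ p ∈ Finset.range N ×ˢ Finset.range N, Stmt14.f p
      = ∑ p ∈ (Finset.range N ×ˢ Finset.range N).filter (fun p => 0 < p.1 ∧ p.1 < p.2),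
          Stmt14.g p := by
    rw [Finset.sum_filter]
    refine Finset.sum_congr rfl fun p _ => ?_
    rw [Stmt14.f, Set.indicator_apply]
    simp [Stmt14.S]
    split_ifs with h <;> simp [h]
  rw [hstep1, Finset.sum_sigma' (Finset.Ico 1 N) (fun n2 => Finset.Ico 1 n2)
    (fun n2 n1 => 1 / (((N : ℝ) - n1) ^ 2 * ((N : ℝ) - n2)))]
  refine Finset.sum_nbij' (fun q => ⟨N - q.1, N - q.2⟩) (fun p => (N - p.1, N - p.2))
    ?_ ?_ ?_ ?_ ?_
  · rintro ⟨a, b⟩ hq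
    simp only [Finset.mem_filter, Finset.mem_product, Finset.mem_range] at hq
    simp only [Finset.mem_sigma, Finset.mem_Ico]
    omega
  · rintro ⟨n2, n1⟩ hp
    simp only [Finset.mem_sigma, Finset.mem_Ico] at hp
    simp only [Finset.mem_filter, Finset.mem_product, Finset.mem_range]
    omega
  · rintro ⟨a, b⟩ hq
    simp only [Finset.mem_filter, Finset.mem_product, Finset.mem_range] at hq
    have h1 : N - (N - a) = a := by omega
    have h2 : N - (N - b) = b := by omega
    simp [h1, h2]
  · rintro ⟨n2, n1⟩ hp
    simp only [Finset.mem_sigma, Finset.mem_Ico] at hp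
    have h1 : N - (N - n2) = n2 := by omega
    have h2 : N - (N - n1) = n1 := by omega
    simp [h1, h2]
  · rintro ⟨a, b⟩ hq
    simp only [Finset.mem_filter, Finset.mem_product, Finset.mem_range] at hq
    simp only [Stmt14.g]
    have ha : a ≤ N := by omega
    have hb : b ≤ N := by omega
    rw [Nat.cast_sub ha, Nat.cast_sub hb]
    have hb' : (b : ℝ) ≤ N := by exact_mod_cast hb
    have ha' : (a : ℝ) ≤ N := by exact_mod_cast ha
    field_simp
    ring
end

section
/- (Base case of the discretization theorem, k=(k) with k ≥ 2) For every integer N ≥ 1 and k ≥ 2: ζ_{<N}(k) = Σ_{0<n<N} 1/n^k = Σ_{0 < n_1 ≤ n_2 ≤ ... ≤ n_k < N} 1/((N−n_1) n_2 n_3 ··· n_k). -/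
open Finset

/-- Nested sum `stmtG w j b = Σ_{0<n₁≤…≤n_j≤b} w n₁ / (n₂⋯n_j)`, built by peeling the
largest coordinate. -/
noncomputable def stmtG (w : ℕ → ℝ) : ℕ → ℕ → ℝ
  | 0, _ => 1
  | j + 1, b => ∑ m ∈ Finset.Icc 1 b, (if j = 0 then w m else 1 / (m : ℝ)) * stmtG w j m

lemma stmtG_succ (w : ℕ → ℝ) (j b : ℕ) :
    stmtG w (j + 1) b =
      ∑ m ∈ Finset.Icc 1 b, (if j = 0 then w m else 1 / (m : ℝ)) * stmtG w j m := rfl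

lemma stmtG_top (w : ℕ → ℝ) (j b : ℕ) :
    stmtG w (j + 1) (b + 1) = stmtG w (j + 1) b +
      (if j = 0 then w (b + 1) else 1 / ((b + 1 : ℕ) : ℝ)) * stmtG w j (b + 1) := by
  rw [stmtG_succ, stmtG_succ, ← Finset.Ico_add_one_right_eq_Icc, ← Finset.Ico_add_one_right_eq_Icc,
    Finset.sum_Ico_succ_top (by omega : 1 ≤ b + 1)]

lemma stmtG_sub (w w' : ℕ → ℝ) (j : ℕ) :
    ∀ b, stmtG (fun a => w a - w' a) (j + 1) b = stmtG w (j + 1) b - stmtG w' (j + 1) b := by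
  induction j with
  | zero =>
      intro b
      rw [stmtG_succ, stmtG_succ, stmtG_succ, ← Finset.sum_sub_distrib]
      refine Finset.sum_congr rfl (fun m _ => ?_)
      simp only [stmtG]
      norm_num
  | succ j ih =>
      intro b
      rw [stmtG_succ, stmtG_succ, stmtG_succ, ← Finset.sum_sub_distrib]
      refine Finset.sum_congr rfl (fun m _ => ?_)
      rw [if_neg (Nat.succ_ne_zero j), if_neg (Nat.succ_ne_zero j), if_neg (Nat.succ_ne_zero j),
        ih m]
      ring

lemma stmtG_congr (w w' : ℕ → ℝ) (j : ℕ) :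
    ∀ b, (∀ a, 1 ≤ a → a ≤ b → w a = w' a) → stmtG w j b = stmtG w' j b := by
  induction j with
  | zero => intro b _; rfl
  | succ j ih =>
      intro b h
      simp only [stmtG_succ]
      refine Finset.sum_congr rfl (fun m hm => ?_)
      rw [Finset.mem_Icc] at hm
      rw [ih m (fun a ha hab => h a ha (hab.trans hm.2))]
      congr 1
      split
      · exact h m hm.1 hm.2
      · rfl

lemma stmt_tele (N : ℕ) :
    ∀ b, b < N →
      ∑ m ∈ Finset.Icc 1 b, (1 : ℝ) / (((N : ℝ) - m) * ((N : ℝ) + 1 - m)) =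
        1 / ((N : ℝ) - b) - 1 / (N : ℝ) := by
  intro b
  induction b with
  | zero => intro _; simp
  | succ b ih =>
      intro hb
      rw [← Finset.Ico_add_one_right_eq_Icc, Finset.sum_Ico_succ_top (by omega), Finset.Ico_add_one_right_eq_Icc,
        ih (Nat.lt_of_succ_lt hb)]
      have h1 : (N : ℝ) - ((b : ℝ) + 1) ≠ 0 := by
        have : ((b : ℝ) + 1) < N := by exact_mod_cast hb
        intro h; linarith
      have h2 : (N : ℝ) - b ≠ 0 := by
        have : (b : ℝ) < N := by exact_mod_cast Nat.lt_of_succ_lt hb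
        intro h; linarith
      have hcast : ((b + 1 : ℕ) : ℝ) = (b : ℝ) + 1 := by push_cast; ring
      rw [hcast]
      have key : (1 : ℝ) / (((N : ℝ) - ((b : ℝ) + 1)) * ((N : ℝ) + 1 - ((b : ℝ) + 1)))
          = 1 / ((N : ℝ) - ((b : ℝ) + 1)) - 1 / ((N : ℝ) - b) := by
        have h3 : (N : ℝ) + 1 - ((b : ℝ) + 1) = (N : ℝ) - b := by ring
        rw [h3, div_sub_div _ _ h1 h2, div_eq_div_iff (mul_ne_zero h1 h2) (mul_ne_zero h1 h2)]
        ring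
      rw [key]; ring

lemma stmtG_d (N : ℕ) (j : ℕ) :
    ∀ b, b < N →
      stmtG (fun a => 1 / (((N : ℝ) - a) * ((N : ℝ) + 1 - a))) (j + 2) b =
        (1 / (N : ℝ)) * stmtG (fun a => 1 / ((N : ℝ) - a)) (j + 1) b := by
  induction j with
  | zero =>
      intro b hb
      rw [stmtG_succ, stmtG_succ, Finset.mul_sum]
      refine Finset.sum_congr rfl (fun m hm => ?_)
      rw [Finset.mem_Icc] at hm
      have hmN : m < N := lt_of_le_of_lt hm.2 hb
      have hG1 : stmtG (fun a => 1 / (((N : ℝ) - a) * ((N : ℝ) + 1 - a))) 1 m =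
          1 / ((N : ℝ) - m) - 1 / (N : ℝ) := by
        rw [stmtG_succ]
        simp only [stmtG, mul_one, if_true]
        exact stmt_tele N m hmN
      rw [if_neg (by norm_num : ¬ (1 : ℕ) = 0), if_pos rfl, hG1]
      simp only [stmtG, mul_one]
      have hm0 : (m : ℝ) ≠ 0 := by
        have : (0 : ℝ) < m := by exact_mod_cast hm.1
        linarith
      have hNm : (N : ℝ) - m ≠ 0 := by
        have : (m : ℝ) < N := by exact_mod_cast hmN
        intro h; linarith
      have hN0 : (N : ℝ) ≠ 0 := by
        have : 0 < N := Nat.pos_of_ne_zero (by omega)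
        have : (0 : ℝ) < N := by exact_mod_cast this
        linarith
      field_simp
      ring
  | succ j ih =>
      intro b hb
      rw [stmtG_succ, stmtG_succ, Finset.mul_sum]
      refine Finset.sum_congr rfl (fun m hm => ?_)
      rw [Finset.mem_Icc] at hm
      rw [if_neg (Nat.succ_ne_zero _), if_neg (Nat.succ_ne_zero _),
        ih m (lt_of_le_of_lt hm.2 hb)]
      ring

/-- Main identity on the nested sums: `stmtG w_N k (N-1) = ζ_{<N}(k)` where
`w_N a = 1/(N-a)`. -/
lemma stmtG_main (k : ℕ) :
    ∀ N : ℕ, stmtG (fun a => 1 / ((N : ℝ) - a)) (k + 1) (N - 1) =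
      ∑ n ∈ Finset.Ico 1 N, (1 : ℝ) / (n : ℝ) ^ (k + 1) := by
  induction k with
  | zero =>
      intro N
      rcases N with _ | n
      · simp [stmtG_succ]
      · rw [stmtG_succ]
        simp only [if_true, stmtG, mul_one, Nat.add_sub_cancel]
        rw [show Finset.Ico 1 (n + 1) = Finset.Icc 1 n from Finset.Ico_add_one_right_eq_Icc 1 n]
        refine (Finset.sum_nbij' (fun m => n + 1 - m) (fun m => n + 1 - m) ?_ ?_ ?_ ?_ ?_).symm
        · intro a ha; simp only [Finset.mem_Icc] at ha ⊢; omega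
        · intro a ha; simp only [Finset.mem_Icc] at ha ⊢; omega
        · intro a ha; simp only [Finset.mem_Icc] at ha
          show n + 1 - (n + 1 - a) = a; omega
        · intro a ha; simp only [Finset.mem_Icc] at ha
          show n + 1 - (n + 1 - a) = a; omega
        · intro a ha
          rw [Finset.mem_Icc] at ha
          have hle : a ≤ n + 1 := by omega
          have h1 : ((n + 1 - a : ℕ) : ℝ) = ((n : ℝ) + 1) - a := by
            push_cast [Nat.cast_sub hle]; ring
          have h2 : ((n + 1 : ℕ) : ℝ) = (n : ℝ) + 1 := by push_cast; ring
          rw [pow_one, h2, show ((n : ℝ) + 1) - ((n + 1 - a : ℕ) : ℝ) = a by rw [h1]; ring]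
  | succ k ih =>
      intro N
      induction N with
      | zero => simp [stmtG_succ]
      | succ n ihN =>
          rcases n with _ | m
          · simp [stmtG_succ]
          show stmtG (fun a => 1 / (((m + 2 : ℕ) : ℝ) - a)) (k + 1 + 1) (m + 1) =
              ∑ n ∈ Finset.Ico 1 (m + 2), (1 : ℝ) / (n : ℝ) ^ (k + 1 + 1)
          rw [stmtG_top, if_neg (Nat.succ_ne_zero k)]
          have hw : stmtG (fun a => 1 / (((m + 2 : ℕ) : ℝ) - a)) (k + 1 + 1) m =
              stmtG (fun a => 1 / (((m + 1 : ℕ) : ℝ) - a) -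
                1 / ((((m + 1 : ℕ) : ℝ) - a) * (((m + 1 : ℕ) : ℝ) + 1 - a))) (k + 1 + 1) m := by
            refine stmtG_congr _ _ _ m (fun a ha1 ha2 => ?_)
            have hA : (0 : ℝ) < ((m + 1 : ℕ) : ℝ) - a := by
              have h : (a : ℝ) < ((m + 1 : ℕ) : ℝ) := by exact_mod_cast (by omega : a < m + 1)
              linarith
            have hB : (0 : ℝ) < ((m + 1 : ℕ) : ℝ) + 1 - a := by linarith
            have e : ((m + 2 : ℕ) : ℝ) - a = (((m + 1 : ℕ) : ℝ) - a) + 1 := by push_cast; ring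
            have e2 : ((m + 1 : ℕ) : ℝ) + 1 - a = (((m + 1 : ℕ) : ℝ) - a) + 1 := by ring
            have hy1 : (((m + 1 : ℕ) : ℝ) - a) + 1 ≠ 0 := by rw [← e2]; exact hB.ne'
            rw [e, e2, eq_sub_iff_add_eq,
              div_add_div _ _ hy1 (mul_ne_zero hA.ne' hy1),
              div_eq_div_iff (mul_ne_zero hy1 (mul_ne_zero hA.ne' hy1)) hA.ne']
            ring
          have hd := stmtG_d (m + 1) k m (by omega)
          rw [show k + 2 = k + 1 + 1 from rfl] at hd
          rw [hw, stmtG_sub, hd]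
          have e1 : stmtG (fun a => 1 / (((m + 1 : ℕ) : ℝ) - a)) (k + 1 + 1) m =
              ∑ n ∈ Finset.Ico 1 (m + 1), (1 : ℝ) / (n : ℝ) ^ (k + 1 + 1) := by
            have h := ihN
            rwa [Nat.add_sub_cancel] at h
          have e2 : stmtG (fun a => 1 / (((m + 1 : ℕ) : ℝ) - a)) (k + 1) m =
              ∑ n ∈ Finset.Ico 1 (m + 1), (1 : ℝ) / (n : ℝ) ^ (k + 1) := by
            have h := ih (m + 1)
            rwa [Nat.add_sub_cancel] at h
          have e3 : stmtG (fun a => 1 / (((m + 2 : ℕ) : ℝ) - a)) (k + 1) (m + 1) =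
              ∑ n ∈ Finset.Ico 1 (m + 2), (1 : ℝ) / (n : ℝ) ^ (k + 1) := by
            have h := ih (m + 2)
            rwa [show m + 2 - 1 = m + 1 from rfl] at h
          rw [e1, e2, e3, show m + 2 = m + 1 + 1 from rfl,
            Finset.sum_Ico_succ_top (by omega : 1 ≤ m + 1),
            Finset.sum_Ico_succ_top (by omega : 1 ≤ m + 1)]
          have hpow : (1 : ℝ) / ((m + 1 : ℕ) : ℝ) * (1 / ((m + 1 : ℕ) : ℝ) ^ (k + 1)) =
              1 / ((m + 1 : ℕ) : ℝ) ^ (k + 1 + 1) := by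
            rw [div_mul_div_comm, one_mul, ← pow_succ']
          rw [mul_add, hpow]
          ring

lemma stmt_monotone_snoc {n : ℕ} {α : Type*} [Preorder α] {g : Fin n → α} {x : α}
    (hg : Monotone g) (h : ∀ i, g i ≤ x) : Monotone (Fin.snoc g x) := by
  intro a b hab
  rcases Fin.eq_castSucc_or_eq_last b with ⟨jj, rfl⟩ | rfl
  · rcases Fin.eq_castSucc_or_eq_last a with ⟨ii, rfl⟩ | rfl
    · rw [Fin.snoc_castSucc, Fin.snoc_castSucc]
      exact hg (Fin.castSucc_le_castSucc_iff.mp hab)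
    · exfalso
      rw [Fin.le_def] at hab
      simp only [Fin.val_last, Fin.coe_castSucc] at hab
      omega
  · rw [Fin.snoc_last]
    rcases Fin.eq_castSucc_or_eq_last a with ⟨ii, rfl⟩ | rfl
    · rw [Fin.snoc_castSucc]; exact h ii
    · rw [Fin.snoc_last]

lemma stmt_conv (N : ℕ) (j : ℕ) :
    ∀ b, b < N →
      (∑ f ∈ Finset.univ.filter
          (fun f : Fin j → Fin N =>
            (∀ i, 0 < (f i : ℕ)) ∧ Monotone f ∧ ∀ i, (f i : ℕ) ≤ b),
        ∏ i, (if i.val = 0 then 1 / ((N : ℝ) - f i) else 1 / (f i : ℝ))) =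
      stmtG (fun a => 1 / ((N : ℝ) - a)) j b := by
  induction j with
  | zero =>
      intro b _
      rw [Finset.filter_true_of_mem
        (fun f _ => ⟨fun i => i.elim0, fun a => a.elim0, fun i => i.elim0⟩)]
      simp [stmtG, Fintype.card_fun]
  | succ j ih =>
      intro b hb
      rw [stmtG_succ]
      rw [← Finset.sum_fiberwise_of_maps_to (g := fun f : Fin (j + 1) → Fin N =>
        ((f (Fin.last j)) : ℕ)) (t := Finset.Icc 1 b)
        (fun f hf => by
          rw [Finset.mem_filter] at hf
          exact Finset.mem_Icc.mpr ⟨hf.2.1 _, hf.2.2.2 _⟩)]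
      refine Finset.sum_congr rfl (fun m hm => ?_)
      rw [Finset.mem_Icc] at hm
      have hmN : m < N := lt_of_le_of_lt hm.2 hb
      have key :
          (∑ f ∈ (Finset.univ.filter
              (fun f : Fin (j + 1) → Fin N =>
                (∀ i, 0 < (f i : ℕ)) ∧ Monotone f ∧ ∀ i, (f i : ℕ) ≤ b)).filter
              (fun f => ((f (Fin.last j)) : ℕ) = m),
            ∏ i, (if i.val = 0 then 1 / ((N : ℝ) - f i) else 1 / (f i : ℝ))) =
          ∑ g ∈ Finset.univ.filter
              (fun g : Fin j → Fin N =>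
                (∀ i, 0 < (g i : ℕ)) ∧ Monotone g ∧ ∀ i, (g i : ℕ) ≤ m),
            (if j = 0 then 1 / ((N : ℝ) - m) else 1 / (m : ℝ)) *
              ∏ i, (if i.val = 0 then 1 / ((N : ℝ) - g i) else 1 / (g i : ℝ)) := by
        refine Finset.sum_nbij' (fun f => Fin.init f)
          (fun g => Fin.snoc g (⟨m, hmN⟩ : Fin N)) ?_ ?_ ?_ ?_ ?_
        · intro f hf
          simp only [Finset.mem_filter] at hf
          obtain ⟨⟨-, hpos, hmono, hbd⟩, hlast⟩ := hf
          refine Finset.mem_filter.mpr ⟨Finset.mem_univ _, fun i => hpos _,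
            hmono.comp Fin.strictMono_castSucc.monotone, fun i => ?_⟩
          have h1 : f (Fin.castSucc i) ≤ f (Fin.last j) := hmono (Fin.le_last _)
          calc ((Fin.init f i : ℕ)) = (f (Fin.castSucc i) : ℕ) := rfl
            _ ≤ (f (Fin.last j) : ℕ) := Fin.le_def.mp h1
            _ = m := hlast
        · intro g hg
          simp only [Finset.mem_filter] at hg
          obtain ⟨-, hpos, hmono, hbd⟩ := hg
          refine Finset.mem_filter.mpr ⟨Finset.mem_filter.mpr
            ⟨Finset.mem_univ _, fun i => ?_, ?_, fun i => ?_⟩, ?_⟩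
          · rcases Fin.eq_castSucc_or_eq_last i with ⟨ii, rfl⟩ | rfl
            · simp only [Fin.snoc_castSucc]; exact hpos _
            · simp only [Fin.snoc_last]; exact hm.1
          · exact stmt_monotone_snoc hmono (fun i => Fin.le_def.mpr (hbd i))
          · rcases Fin.eq_castSucc_or_eq_last i with ⟨ii, rfl⟩ | rfl
            · simp only [Fin.snoc_castSucc]; exact (hbd ii).trans hm.2
            · simp only [Fin.snoc_last]; exact hm.2
          · simp only [Fin.snoc_last]
        · intro f hf
          simp only [Finset.mem_filter] at hf
          have hfl : f (Fin.last j) = (⟨m, hmN⟩ : Fin N) := Fin.ext hf.2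
          show Fin.snoc (Fin.init f) (⟨m, hmN⟩ : Fin N) = f
          rw [← hfl]
          exact Fin.snoc_init_self f
        · intro g _
          exact Fin.init_snoc _ _
        · intro f hf
          simp only [Finset.mem_filter] at hf
          have hfl : ((f (Fin.last j) : ℕ) : ℝ) = (m : ℝ) := by exact_mod_cast hf.2
          rw [Fin.prod_univ_castSucc, mul_comm]
          congr 1
          · simp only [Fin.val_last]
            rcases Nat.eq_zero_or_pos j with rfl | hj
            · rw [if_pos rfl, if_pos rfl, hfl]
            · rw [if_neg (by omega), if_neg (by omega), hfl]
      rw [key, ← Finset.mul_sum, ih m hmN]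

/-- depth one case of the discretization theorem: for `N ≥ 1` and
`k ≥ 2`, `Σ_{0<n<N} 1/n^k = Σ_{0<n₁≤n₂≤⋯≤n_k<N} 1/((N−n₁) n₂ ⋯ n_k)`. -/
theorem stmt_16 (N k : ℕ) (hN : 1 ≤ N) (hk : 2 ≤ k) :
    ∑ n ∈ Finset.Ico 1 N, (1 : ℝ) / (n : ℝ) ^ k =
      ∑ n ∈ Finset.univ.filter
          (fun n : Fin k → Fin N => (∀ i, 0 < (n i : ℕ)) ∧ Monotone n),
        ∏ i, (if i.val = 0 then 1 / ((N : ℝ) - n i) else 1 / (n i : ℝ)) := by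
  obtain ⟨k', rfl⟩ : ∃ m, k = m + 1 := ⟨k - 1, by omega⟩
  have hfilter : (Finset.univ.filter
      (fun n : Fin (k' + 1) → Fin N => (∀ i, 0 < (n i : ℕ)) ∧ Monotone n)) =
      Finset.univ.filter
      (fun n : Fin (k' + 1) → Fin N =>
        (∀ i, 0 < (n i : ℕ)) ∧ Monotone n ∧ ∀ i, (n i : ℕ) ≤ N - 1) := by
    refine Finset.filter_congr (fun f _ => ?_)
    constructor
    · rintro ⟨h1, h2⟩
      exact ⟨h1, h2, fun i => by have := (f i).isLt; omega⟩
    · rintro ⟨h1, h2, _⟩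
      exact ⟨h1, h2⟩
  rw [hfilter, stmt_conv N (k' + 1) (N - 1) (by omega), stmtG_main k' N]
end
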